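/- arXiv:0802.0738 — 4 statements merged into one kernel-verified Lean document; each statement's English description precedes it below -/
import Mathlib

section
/- Let λ_1 > … > λ_m be real numbers and let w be real. Then lim over distinct tuples (w_1,…,w_L) → (w,…,w) of det[e^{λ_i w_j'}]_{i,j=1}^m / (∏_{i<j}(λ_i − λ_j) ∏_{i<j}(w_j' − w_i')) — where (w_1',…,w_m') consists of fixed distinct values outside a group of L arguments tending to w — equals (1/∏_{i=1}^{L−1} i!) times det G / (∏_{i<j}(λ_i − λ_j) ∏_{i<j, w_i ≠ w_j}(w_i − w_j)), where the columns of G corresponding to the L coincident arguments are λ_i^{L−1} e^{λ_i w}, λ_i^{L−2} e^{λ_i w}, …, λ_i e^{λ_i w}, e^{λ_i w}, and the remaining columns are e^{λ_i w_j}. -/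
/-!
Let `s` be the block of coalescing arguments `x_j`. Newton's interpolation formula writes
`e^{λ x_j}`, `j ∈ s`, through the divided differences of `t ↦ e^{λ t}` at the nodes
`x_b, …, x_{max s}` (`b ∈ s`). Hence `[e^{λ_i x_j}]` factors as `C · T`, where the block columns of
`C` hold these divided differences and `T` is triangular with determinant
`∏_{j < c in s} (x_j - x_c)`, which cancels the block part of the Vandermonde product in the
denominator. The divided differences of the exponential are an everywhere convergent series of
complete homogeneous polynomials in the nodes, so they stay continuous when nodes coincide; at
`n + 1` nodes equal to `w` their value is `λ^n e^{λ w} / n!`, which yields `G` and the factorials.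
-/

open Filter Topology Matrix Finset

open scoped Nat

section CompleteHomogeneous

variable {R : Type*}

def completeHomogeneous [CommSemiring R] : ℕ → List R → R
  | 0, _ => 1
  | _ + 1, [] => 0
  | d + 1, a :: l => a * completeHomogeneous d (a :: l) + completeHomogeneous (d + 1) l

@[simp] lemma completeHomogeneous_zero [CommSemiring R] (l : List R) :
    completeHomogeneous 0 l = 1 := by
  rw [completeHomogeneous]

@[simp] lemma completeHomogeneous_succ_nil [CommSemiring R] (d : ℕ) :
    completeHomogeneous (d + 1) ([] : List R) = 0 := by
  rw [completeHomogeneous]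

lemma completeHomogeneous_succ_cons [CommSemiring R] (d : ℕ) (a : R) (l : List R) :
    completeHomogeneous (d + 1) (a :: l) =
      a * completeHomogeneous d (a :: l) + completeHomogeneous (d + 1) l := by
  rw [completeHomogeneous]

lemma completeHomogeneous_cons_sub_cons [CommRing R] (d : ℕ) (z a : R) (l : List R) :
    completeHomogeneous (d + 1) (z :: l) - completeHomogeneous (d + 1) (a :: l) =
      (z - a) * completeHomogeneous d (z :: a :: l) := by
  induction d with
  | zero => simp [completeHomogeneous_succ_cons]
  | succ d ih =>
    rw [completeHomogeneous_succ_cons (d + 1) z, completeHomogeneous_succ_cons (d + 1) a,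
      completeHomogeneous_succ_cons d z (a :: l)]
    linear_combination z * ih

lemma completeHomogeneous_replicate [CommSemiring R] (d n : ℕ) (w : R) :
    completeHomogeneous d (List.replicate (n + 1) w) = (d + n).choose n * w ^ d := by
  induction d generalizing n with
  | zero => simp
  | succ d ihd =>
    induction n with
    | zero => simp [completeHomogeneous_succ_cons, pow_succ', (by simpa using ihd 0 :
        completeHomogeneous d [w] = w ^ d)]
    | succ n ihn =>
      rw [List.replicate_succ, completeHomogeneous_succ_cons, ← List.replicate_succ, ihd, ihn,
        show d + 1 + (n + 1) = d + (n + 1) + 1 by omega, Nat.choose_succ_succ' (d + (n + 1)),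
        show d + (n + 1) = d + 1 + n by omega]
      push_cast
      ring

lemma abs_completeHomogeneous_le (d : ℕ) (l : List ℝ) {r : ℝ} (hr : 0 ≤ r)
    (hl : ∀ c ∈ l, |c| ≤ r) :
    |completeHomogeneous d l| ≤ completeHomogeneous d (List.replicate l.length r) := by
  induction d, l using completeHomogeneous.induct with
  | case1 l => simp
  | case2 d => simp
  | case3 d a l ihd ihl =>
    simp only [List.mem_cons, forall_eq_or_imp] at hl ihd
    rw [List.length_cons, List.replicate_succ, completeHomogeneous_succ_cons,
      completeHomogeneous_succ_cons, ← List.replicate_succ]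
    calc |a * completeHomogeneous d (a :: l) + completeHomogeneous (d + 1) l|
        ≤ |a| * |completeHomogeneous d (a :: l)| + |completeHomogeneous (d + 1) l| := by
          rw [← abs_mul]; exact abs_add_le _ _
      _ ≤ _ := add_le_add (mul_le_mul hl.1 (ihd hl) (abs_nonneg _) hr) (ihl hl.2)

lemma continuous_completeHomogeneous_map {ι : Type*} [CommRing R] [TopologicalSpace R]
    [IsTopologicalRing R] (d : ℕ) (idx : List ι) :
    Continuous fun y : ι → R => completeHomogeneous d (idx.map y) := by
  induction d generalizing idx with
  | zero => simp [continuous_const]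
  | succ d ihd =>
    induction idx with
    | nil => simp [continuous_const]
    | cons i idx ihi =>
      simp only [List.map_cons, completeHomogeneous_succ_cons]
      exact ((continuous_apply i).mul (by simpa using ihd (i :: idx))).add ihi

end CompleteHomogeneous

section DividedDifference

variable {R : Type*}

/-- The divided difference of `X ^ N` at the nodes `l`; it vanishes at more than `N + 1` nodes. -/
def powDividedDiff [CommSemiring R] (N : ℕ) (l : List R) : R :=
  if l.length ≤ N + 1 then completeHomogeneous (N + 1 - l.length) l else 0

lemma powDividedDiff_singleton [CommSemiring R] (N : ℕ) (z : R) :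
    powDividedDiff N [z] = z ^ N := by
  simpa [powDividedDiff] using completeHomogeneous_replicate N 0 z

lemma powDividedDiff_nil [CommSemiring R] (N : ℕ) : powDividedDiff N ([] : List R) = 0 := by
  simp [powDividedDiff]

lemma powDividedDiff_cons_sub_cons [CommRing R] (N : ℕ) (z a : R) (l : List R) :
    powDividedDiff N (z :: l) - powDividedDiff N (a :: l) =
      (z - a) * powDividedDiff N (z :: a :: l) := by
  simp only [powDividedDiff, List.length_cons]
  rcases lt_trichotomy l.length N with h | rfl | h
  · obtain ⟨d, hd⟩ : ∃ d, N + 1 - (l.length + 1) = d + 1 := ⟨N - l.length - 1, by omega⟩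
    rw [if_pos (by omega), if_pos (by omega), if_pos (by omega), hd,
      show N + 1 - (l.length + 1 + 1) = d by omega, completeHomogeneous_cons_sub_cons]
  · simp
  · rw [if_neg (by omega), if_neg (by omega), if_neg (by omega)]
    ring

lemma powDividedDiff_replicate [CommSemiring R] (N s : ℕ) (w : R) :
    powDividedDiff N (List.replicate (s + 1) w) = N.choose s * w ^ (N - s) := by
  unfold powDividedDiff
  rw [List.length_replicate]
  split_ifs with h
  · rw [show N + 1 - (s + 1) = N - s by omega, completeHomogeneous_replicate,
      Nat.sub_add_cancel (by omega)]
  · simp [Nat.choose_eq_zero_of_lt (by omega : N < s)]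

lemma abs_powDividedDiff_le (N : ℕ) (l : List ℝ) {r : ℝ} (hr : 0 ≤ r)
    (hl : ∀ c ∈ l, |c| ≤ r) :
    |powDividedDiff N l| ≤ powDividedDiff N (List.replicate l.length r) := by
  unfold powDividedDiff
  rw [List.length_replicate]
  split_ifs
  · exact abs_completeHomogeneous_le _ l hr hl
  · simp

lemma continuous_powDividedDiff_map {ι : Type*} [CommRing R] [TopologicalSpace R]
    [IsTopologicalRing R] (N : ℕ) (idx : List ι) :
    Continuous fun y : ι → R => powDividedDiff N (idx.map y) := by
  simp only [powDividedDiff, List.length_map]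
  split_ifs
  · exact continuous_completeHomogeneous_map _ idx
  · exact continuous_const

/-- The divided difference of `t ↦ exp (a * t)` at the nodes `l`. -/
noncomputable def expDividedDiff (a : ℝ) (l : List ℝ) : ℝ :=
  ∑' N, a ^ N / N ! * powDividedDiff N l

lemma hasSum_expDividedDiff_replicate (a w : ℝ) (s : ℕ) :
    HasSum (fun N => a ^ N / N ! * powDividedDiff N (List.replicate (s + 1) w))
      (a ^ s * Real.exp (a * w) / s !) := by
  have hsmall : ∑ N ∈ range s, a ^ N / N ! * powDividedDiff N (List.replicate (s + 1) w) = 0 :=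
    sum_eq_zero fun N hN => by
      simp [powDividedDiff_replicate, Nat.choose_eq_zero_of_lt (mem_range.mp hN)]
  rw [← hasSum_nat_add_iff' s, hsmall, sub_zero]
  have hterm (n : ℕ) : a ^ (n + s) / (n + s)! * powDividedDiff (n + s) (List.replicate (s + 1) w)
      = a ^ s / s ! * ((a * w) ^ n / n !) := by
    rw [powDividedDiff_replicate, Nat.add_sub_cancel, ← Nat.add_choose_mul_factorial_mul_factorial]
    have : (n + s).choose s ≠ 0 := (Nat.choose_pos (by omega)).ne'
    push_cast
    field_simp
    ring
  simp_rw [hterm, mul_div_right_comm _ (Real.exp _), Real.exp_eq_exp_ℝ]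
  exact (NormedSpace.expSeries_div_hasSum_exp (a * w)).mul_left _

lemma summable_expDividedDiff_replicate (a r : ℝ) (n : ℕ) :
    Summable fun N => a ^ N / N ! * powDividedDiff N (List.replicate n r) := by
  cases n with
  | zero => simp [powDividedDiff_nil]
  | succ s => exact (hasSum_expDividedDiff_replicate a r s).summable

lemma norm_expDividedDiff_term_le (a : ℝ) (N : ℕ) (l : List ℝ) {r : ℝ} (hr : 0 ≤ r)
    (hl : ∀ c ∈ l, |c| ≤ r) :
    ‖a ^ N / N ! * powDividedDiff N l‖ ≤
      |a| ^ N / N ! * powDividedDiff N (List.replicate l.length r) := by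
  rw [Real.norm_eq_abs, abs_mul, abs_div, abs_pow, Nat.abs_cast]
  exact mul_le_mul_of_nonneg_left (abs_powDividedDiff_le N l hr hl) (by positivity)

lemma summable_expDividedDiff (a : ℝ) (l : List ℝ) :
    Summable fun N => a ^ N / N ! * powDividedDiff N l :=
  (summable_expDividedDiff_replicate |a| (l.map abs).sum l.length).of_norm_bounded
    fun N => norm_expDividedDiff_term_le a N l (List.sum_nonneg (by simp))
      fun c hc => List.single_le_sum (by simp) _ (List.mem_map_of_mem hc)

lemma expDividedDiff_cons_sub_cons (a z b : ℝ) (l : List ℝ) :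
    expDividedDiff a (z :: l) - expDividedDiff a (b :: l) =
      (z - b) * expDividedDiff a (z :: b :: l) := by
  rw [expDividedDiff, expDividedDiff, expDividedDiff, ← (summable_expDividedDiff a _).tsum_sub
    (summable_expDividedDiff a _), ← tsum_mul_left]
  congr 1 with N
  rw [← mul_sub, powDividedDiff_cons_sub_cons]
  ring

lemma expDividedDiff_replicate (a w : ℝ) (s : ℕ) :
    expDividedDiff a (List.replicate (s + 1) w) = a ^ s * Real.exp (a * w) / s ! :=
  (hasSum_expDividedDiff_replicate a w s).tsum_eq

lemma expDividedDiff_singleton (a z : ℝ) : expDividedDiff a [z] = Real.exp (a * z) := by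
  simpa using expDividedDiff_replicate a z 0

lemma continuousAt_expDividedDiff_map {ι : Type*} [Fintype ι] (a : ℝ) (idx : List ι)
    (y₀ : ι → ℝ) : ContinuousAt (fun y : ι → ℝ => expDividedDiff a (idx.map y)) y₀ := by
  have hball : Metric.ball 0 (‖y₀‖ + 1) ∈ 𝓝 y₀ :=
    Metric.isOpen_ball.mem_nhds (by simp)
  refine ContinuousOn.continuousAt ?_ hball
  refine continuousOn_tsum
    (fun N => ((continuous_powDividedDiff_map N idx).const_mul _).continuousOn)
    (summable_expDividedDiff_replicate |a| (‖y₀‖ + 1) idx.length) fun N y hy => ?_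
  simpa using norm_expDividedDiff_term_le a N (idx.map y) (by positivity) fun c hc => by
    obtain ⟨i, -, rfl⟩ := List.mem_map.mp hc
    exact (norm_le_pi_norm y i).trans (mem_ball_zero_iff.mp hy).le

end DividedDifference

section Newton

variable {ι R : Type*} [LinearOrder ι]

def suffixNodes (x : ι → R) (s : Finset ι) (j : ι) : List R :=
  ((s.filter (j ≤ ·)).sort).map x

lemma suffixNodes_insert_of_lt {x : ι → R} {s : Finset ι} {a j : ι} (ha : ∀ c ∈ s, a < c)
    (hj : j ∈ s) : suffixNodes x (insert a s) j = suffixNodes x s j := by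
  rw [suffixNodes, filter_insert, if_neg (ha j hj).not_ge, suffixNodes]

lemma suffixNodes_insert_self {x : ι → R} {s : Finset ι} {a : ι} (ha : ∀ c ∈ s, a < c) :
    suffixNodes x (insert a s) a = x a :: s.sort.map x := by
  have hfilter : (insert a s).filter (a ≤ ·) = insert a s :=
    filter_true_of_mem fun c hc => by
      rcases mem_insert.mp hc with rfl | hc
      exacts [le_rfl, (ha c hc).le]
  rw [suffixNodes, hfilter, sort_insert _ (fun c hc => (ha c hc).le)
    fun has => (ha a has).false]
  rfl

lemma suffixNodes_of_forall_eq {y : ι → R} {s : Finset ι} {w : R}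
    (hy : ∀ c ∈ s, y c = w) {j : ι} (hj : j ∈ s) :
    suffixNodes y s j = List.replicate (#{c ∈ s | j < c} + 1) w := by
  have hle : s.filter (j ≤ ·) = insert j (s.filter (j < ·)) := by
    ext c
    simp only [mem_filter, mem_insert, le_iff_lt_or_eq]
    constructor
    · rintro ⟨hc, h | rfl⟩
      exacts [Or.inr ⟨hc, h⟩, Or.inl rfl]
    · rintro (rfl | ⟨hc, h⟩)
      exacts [⟨hj, Or.inr rfl⟩, ⟨hc, Or.inl h⟩]
  rw [List.eq_replicate_iff, suffixNodes, List.length_map, length_sort]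
  refine ⟨by rw [hle, card_insert_of_notMem (by simp)], fun b hb => ?_⟩
  obtain ⟨c, hc, rfl⟩ := List.mem_map.1 hb
  exact hy c (mem_filter.1 (mem_sort _ |>.1 hc)).1

variable [CommRing R] {f : R → R} {D : List R → R}

theorem newton_expansion (hD₁ : ∀ z, D [z] = f z)
    (hD : ∀ z a l, D (z :: l) - D (a :: l) = (z - a) * D (z :: a :: l))
    (x : ι → R) (s : Finset ι) (z : R) :
    f z = ∑ j ∈ s, D (suffixNodes x s j) * ∏ c ∈ s with j < c, (z - x c) +
      D (z :: s.sort.map x) * ∏ c ∈ s, (z - x c) := by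
  induction s using Finset.induction_on_min with
  | empty => simp [hD₁]
  | insert a s ha ih =>
    have has : a ∉ s := fun h => (ha a h).false
    have hgt : (insert a s).filter (a < ·) = s := by
      rw [filter_insert, if_neg (lt_irrefl a), filter_true_of_mem ha]
    rw [sum_insert has, suffixNodes_insert_self ha, sort_insert _ (fun c hc => (ha c hc).le) has,
      List.map_cons, hgt, prod_insert has]
    rw [sum_congr rfl fun j hj => by
      rw [suffixNodes_insert_of_lt ha hj, filter_insert, if_neg (ha j hj).not_gt]]
    rw [ih]
    linear_combination (∏ c ∈ s, (z - x c)) * hD z (x a) (s.sort.map x)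

theorem newton_expansion_of_mem (hD₁ : ∀ z, D [z] = f z)
    (hD : ∀ z a l, D (z :: l) - D (a :: l) = (z - a) * D (z :: a :: l))
    (x : ι → R) {s : Finset ι} {j : ι} (hj : j ∈ s) :
    f (x j) = ∑ b ∈ s, D (suffixNodes x s b) * ∏ c ∈ s with b < c, (x j - x c) := by
  rw [newton_expansion hD₁ hD x s (x j), prod_eq_zero hj (sub_self _), mul_zero, add_zero]

end Newton

section PairProducts

variable {ι M : Type*} [LinearOrder ι] [CommMonoid M]

lemma prod_card_filter_lt (g : ℕ → M) (s : Finset ι) :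
    ∏ j ∈ s, g #{c ∈ s | j < c} = ∏ i ∈ range #s, g i := by
  induction s using Finset.induction_on_min with
  | empty => simp
  | insert a s ha ih =>
    have has : a ∉ s := fun h => (ha a h).false
    rw [prod_insert has, card_insert_of_notMem has, prod_range_succ, filter_insert,
      if_neg (lt_irrefl a), filter_true_of_mem ha, mul_comm, ← ih]
    congr 1
    refine prod_congr rfl fun j hj => ?_
    rw [filter_insert, if_neg (ha j hj).not_gt]

lemma prod_lt_pairs_eq_mul [Fintype ι] (g : ι → ι → M) (s : Finset ι) :
    ∏ p ∈ univ.filter (fun p : ι × ι => p.1 < p.2), g p.1 p.2 =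
      (∏ j ∈ s, ∏ c ∈ s with j < c, g j c) *
        ∏ p ∈ univ.filter (fun p : ι × ι => p.1 < p.2 ∧ ¬(p.1 ∈ s ∧ p.2 ∈ s)), g p.1 p.2 := by
  rw [← prod_filter_mul_prod_filter_not _ (fun p : ι × ι => p.1 ∈ s ∧ p.2 ∈ s), filter_filter,
    filter_filter]
  congr 1
  simp_rw [prod_filter (fun c => _ < c), ← prod_product' s s fun j c => if j < c then g j c else 1,
    ← prod_filter]
  congr 1
  ext p
  simp only [mem_filter, mem_univ, true_and, mem_product]
  tauto

lemma filter_not_both_mem_eq_filter_ne {β : Type*} [DecidableEq β] [Fintype ι] {s : Finset ι}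
    {y : ι → β} {w : β} (hs : ∀ c ∈ s, y c = w) (hout : ∀ c ∉ s, y c ≠ w)
    (hinj : Set.InjOn y (↑s)ᶜ) :
    univ.filter (fun p : ι × ι => p.1 < p.2 ∧ ¬(p.1 ∈ s ∧ p.2 ∈ s)) =
      univ.filter (fun p : ι × ι => p.1 < p.2 ∧ y p.1 ≠ y p.2) := by
  refine filter_congr fun p _ => and_congr_right fun hp => ?_
  by_cases h₁ : p.1 ∈ s <;> by_cases h₂ : p.2 ∈ s
  · simp [h₁, h₂, hs]
  · simp [h₁, h₂, hs _ h₁, (hout _ h₂).symm]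
  · simp [h₁, h₂, hs _ h₂, hout _ h₁]
  · simpa [h₁, h₂] using fun h => hp.ne (hinj h₁ h₂ h)

end PairProducts

section ConfluentMatrix

variable {ι R : Type*} [Fintype ι] [LinearOrder ι] [CommRing R]

def confluentMatrix (f : ι → R → R) (D : ι → List R → R) (x : ι → R) (s : Finset ι) :
    Matrix ι ι R :=
  of fun i j => if j ∈ s then D i (suffixNodes x s j) else f i (x j)

def newtonMatrix (x : ι → R) (s : Finset ι) : Matrix ι ι R :=
  of fun b j => if b ∈ s ∧ j ∈ s then ∏ c ∈ s with b < c, (x j - x c) else if b = j then 1 else 0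

lemma of_eq_confluentMatrix_mul_newtonMatrix {f : ι → R → R} {D : ι → List R → R}
    (hD₁ : ∀ i z, D i [z] = f i z)
    (hD : ∀ i z a l, D i (z :: l) - D i (a :: l) = (z - a) * D i (z :: a :: l))
    (x : ι → R) (s : Finset ι) :
    of (fun i j => f i (x j)) = confluentMatrix f D x s * newtonMatrix x s := by
  ext i j
  rw [mul_apply, of_apply]
  by_cases hj : j ∈ s
  · rw [newton_expansion_of_mem (hD₁ i) (hD i) x hj, ← sum_subset (subset_univ s)]
    · refine sum_congr rfl fun b hb => ?_
      simp [confluentMatrix, newtonMatrix, hb, hj]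
    · intro b _ hb
      simp [newtonMatrix, hb, show b ≠ j by rintro rfl; exact hb hj]
  · simp [confluentMatrix, newtonMatrix, hj]

lemma det_newtonMatrix (x : ι → R) (s : Finset ι) :
    (newtonMatrix x s).det = ∏ j ∈ s, ∏ c ∈ s with j < c, (x j - x c) := by
  rw [det_of_isLowerTriangular]
  · calc ∏ j, newtonMatrix x s j j
        = ∏ j, if j ∈ s then ∏ c ∈ s with j < c, (x j - x c) else 1 :=
          prod_congr rfl fun j _ => by by_cases hj : j ∈ s <;> simp [newtonMatrix, hj]
      _ = _ := by rw [prod_ite_mem, univ_inter]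
  · intro b j hbj
    replace hbj : b < j := hbj
    simp only [newtonMatrix, of_apply]
    split_ifs with h h'
    · exact prod_eq_zero (mem_filter.mpr ⟨h.2, hbj⟩) (sub_self _)
    · exact absurd h' hbj.ne
    · rfl

theorem det_eq_det_confluentMatrix_mul {f : ι → R → R} {D : ι → List R → R}
    (hD₁ : ∀ i z, D i [z] = f i z)
    (hD : ∀ i z a l, D i (z :: l) - D i (a :: l) = (z - a) * D i (z :: a :: l))
    (x : ι → R) (s : Finset ι) :
    (of fun i j => f i (x j)).det =
      (confluentMatrix f D x s).det * ∏ j ∈ s, ∏ c ∈ s with j < c, (x j - x c) := by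
  rw [of_eq_confluentMatrix_mul_newtonMatrix hD₁ hD x s, det_mul, det_newtonMatrix]

end ConfluentMatrix

section Exp

variable {ι : Type*} [Fintype ι] [LinearOrder ι]

noncomputable abbrev expConfluentMatrix (lam y : ι → ℝ) (s : Finset ι) : Matrix ι ι ℝ :=
  confluentMatrix (fun i t => Real.exp (lam i * t)) (fun i => expDividedDiff (lam i)) y s

theorem det_exp_eq_det_expConfluentMatrix_mul (lam y : ι → ℝ) (s : Finset ι) :
    (of fun i j => Real.exp (lam i * y j)).det =
      (expConfluentMatrix lam y s).det * ∏ j ∈ s, ∏ c ∈ s with j < c, (y j - y c) :=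
  det_eq_det_confluentMatrix_mul (fun i => expDividedDiff_singleton (lam i))
    (fun i => expDividedDiff_cons_sub_cons (lam i)) y s

lemma continuousAt_expConfluentMatrix (lam : ι → ℝ) (s : Finset ι) (y₀ : ι → ℝ) :
    ContinuousAt (fun y => expConfluentMatrix lam y s) y₀ := by
  refine continuousAt_pi.2 fun i => continuousAt_pi.2 fun j => ?_
  by_cases hj : j ∈ s
  · simpa [confluentMatrix, hj, suffixNodes] using continuousAt_expDividedDiff_map (lam i) _ y₀
  · simp only [confluentMatrix, of_apply, hj, if_false]
    exact (by fun_prop : Continuous fun y : ι → ℝ => Real.exp (lam i * y j)).continuousAt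

theorem tendsto_det_exp_div_prod_sub (lam : ι → ℝ) (s : Finset ι) {y₀ : ι → ℝ}
    (hy₀ : ∏ p ∈ univ.filter (fun p : ι × ι => p.1 < p.2 ∧ ¬(p.1 ∈ s ∧ p.2 ∈ s)),
      (y₀ p.1 - y₀ p.2) ≠ 0) :
    Tendsto (fun y : ι → ℝ => (of fun i j => Real.exp (lam i * y j)).det /
        ∏ p ∈ univ.filter (fun p : ι × ι => p.1 < p.2), (y p.1 - y p.2))
      (𝓝[{y | Function.Injective y}] y₀)
      (𝓝 ((expConfluentMatrix lam y₀ s).det /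
        ∏ p ∈ univ.filter (fun p : ι × ι => p.1 < p.2 ∧ ¬(p.1 ∈ s ∧ p.2 ∈ s)),
          (y₀ p.1 - y₀ p.2))) := by
  have hcont : ContinuousAt (fun y : ι → ℝ => (expConfluentMatrix lam y s).det /
      ∏ p ∈ univ.filter (fun p : ι × ι => p.1 < p.2 ∧ ¬(p.1 ∈ s ∧ p.2 ∈ s)),
        (y p.1 - y p.2)) y₀ :=
    (continuous_id.matrix_det.continuousAt.comp (continuousAt_expConfluentMatrix lam s y₀)).div
      (by fun_prop) hy₀
  refine (hcont.tendsto.mono_left nhdsWithin_le_nhds).congr'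
    (eventuallyEq_nhdsWithin_of_eqOn fun y hy => ?_)
  have hblock : ∏ j ∈ s, ∏ c ∈ s with j < c, (y j - y c) ≠ 0 :=
    prod_ne_zero_iff.2 fun j _ => prod_ne_zero_iff.2 fun c hc =>
      sub_ne_zero.2 fun h => (hy h ▸ (mem_filter.1 hc).2).false
  rw [det_exp_eq_det_expConfluentMatrix_mul lam y s, prod_lt_pairs_eq_mul (fun a b => y a - y b) s,
    mul_comm, mul_div_mul_left _ _ hblock]

theorem det_expConfluentMatrix_of_forall_eq (lam : ι → ℝ) {y : ι → ℝ} {s : Finset ι} {w : ℝ}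
    (hy : ∀ c ∈ s, y c = w) :
    (of fun i j => if j ∈ s then lam i ^ #{c ∈ s | j < c} * Real.exp (lam i * w)
        else Real.exp (lam i * y j)).det =
      (expConfluentMatrix lam y s).det * ∏ i ∈ range #s, (i ! : ℝ) := by
  have hfac : of (fun i j => if j ∈ s then lam i ^ #{c ∈ s | j < c} * Real.exp (lam i * w)
        else Real.exp (lam i * y j)) =
      expConfluentMatrix lam y s *
        diagonal fun j => if j ∈ s then ((#{c ∈ s | j < c})! : ℝ) else 1 := by
    ext i j
    by_cases hj : j ∈ s
    · simp [confluentMatrix, hj, suffixNodes_of_forall_eq hy hj, expDividedDiff_replicate,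
        div_mul_cancel₀ _ (Nat.cast_ne_zero.2 (Nat.factorial_ne_zero _) : ((_)! : ℝ) ≠ 0)]
    · simp [confluentMatrix, hj]
  rw [hfac, det_mul, det_diagonal, prod_ite_mem, univ_inter,
    prod_card_filter_lt (fun n => (n ! : ℝ)) s]

theorem tendsto_det_exp_div_prod_sub_of_forall_eq (lam : ι → ℝ) (s : Finset ι) {y₀ : ι → ℝ} {w : ℝ}
    (hs : ∀ c ∈ s, y₀ c = w) (hout : ∀ c ∉ s, y₀ c ≠ w) (hinj : Set.InjOn y₀ (↑s)ᶜ) :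
    Tendsto (fun y : ι → ℝ => (of fun i j => Real.exp (lam i * y j)).det /
        ∏ p ∈ univ.filter (fun p : ι × ι => p.1 < p.2), (y p.1 - y p.2))
      (𝓝[{y | Function.Injective y}] y₀)
      (𝓝 ((of fun i j => if j ∈ s then lam i ^ #{c ∈ s | j < c} * Real.exp (lam i * w)
          else Real.exp (lam i * y₀ j)).det /
        ((∏ i ∈ range #s, (i ! : ℝ)) *
          ∏ p ∈ univ.filter (fun p : ι × ι => p.1 < p.2 ∧ y₀ p.1 ≠ y₀ p.2),
            (y₀ p.1 - y₀ p.2)))) := by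
  have hpairs := filter_not_both_mem_eq_filter_ne hs hout hinj
  have hoff : ∏ p ∈ univ.filter (fun p : ι × ι => p.1 < p.2 ∧ y₀ p.1 ≠ y₀ p.2),
      (y₀ p.1 - y₀ p.2) ≠ 0 :=
    prod_ne_zero_iff.2 fun p hp => sub_ne_zero.2 (mem_filter.1 hp).2.2
  have hfac : ∏ i ∈ range #s, (i ! : ℝ) ≠ 0 := prod_ne_zero_iff.2 fun i _ => by positivity
  convert tendsto_det_exp_div_prod_sub lam s (hpairs ▸ hoff) using 2
  rw [det_expConfluentMatrix_of_forall_eq lam hs, hpairs, mul_comm (det _),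
    mul_div_mul_left _ _ hfac]

end Exp

lemma card_filter_fin_le_lt {m : ℕ} (a b : ℕ) (hb : b ≤ m) :
    #{j : Fin m | a ≤ (j : ℕ) ∧ (j : ℕ) < b} = b - a := by
  rw [← Nat.card_Ico, ← card_map Fin.valEmbedding]
  congr 1
  ext n
  simp only [Finset.mem_map, mem_filter, mem_univ, true_and, Fin.valEmbedding_apply, mem_Ico]
  constructor
  · rintro ⟨j, h, rfl⟩
    exact h
  · intro h
    exact ⟨⟨n, by omega⟩, h, rfl⟩

lemma card_filter_fin_lt_of_le {m k L : ℕ} (hkL : k + L ≤ m) {j : Fin m} (hj : k ≤ (j : ℕ)) :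
    #{c ∈ ({c : Fin m | k ≤ (c : ℕ) ∧ (c : ℕ) < k + L} : Finset (Fin m)) | j < c} =
      k + L - 1 - j := by
  rw [filter_filter, show k + L - 1 - (j : ℕ) = k + L - (j + 1) by omega,
    ← card_filter_fin_le_lt (j + 1) (k + L) hkL]
  exact congrArg card (filter_congr fun c _ => by rw [Fin.lt_def]; omega)

def spliceBlock {m L : ℕ} (k : ℕ) (wf : Fin m → ℝ) (u : Fin L → ℝ) (j : Fin m) : ℝ :=
  if h : k ≤ (j : ℕ) ∧ (j : ℕ) < k + L then u ⟨(j : ℕ) - k, Nat.sub_lt_left_of_lt_add h.1 h.2⟩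
  else wf j

lemma continuous_spliceBlock {m L : ℕ} (k : ℕ) (wf : Fin m → ℝ) :
    Continuous (spliceBlock (L := L) k wf) :=
  continuous_pi fun j => by
    by_cases h : k ≤ (j : ℕ) ∧ (j : ℕ) < k + L <;>
      simp only [spliceBlock, h, and_self, dite_true, dite_false] <;> fun_prop

lemma spliceBlock_const {m L : ℕ} (k : ℕ) (wf : Fin m → ℝ) (w : ℝ) :
    spliceBlock (L := L) k wf (fun _ => w) =
      fun j : Fin m => if k ≤ (j : ℕ) ∧ (j : ℕ) < k + L then w else wf j :=
  funext fun _ => dite_eq_ite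

lemma tendsto_spliceBlock {m L : ℕ} (k : ℕ) (wf : Fin m → ℝ) (w : ℝ) :
    Tendsto (spliceBlock (L := L) k wf)
      (𝓝[{u | Function.Injective (spliceBlock k wf u)}] fun _ => w)
      (𝓝[{y | Function.Injective y}]
        fun j : Fin m => if k ≤ (j : ℕ) ∧ (j : ℕ) < k + L then w else wf j) :=
  spliceBlock_const k wf w ▸
    (continuous_spliceBlock k wf).continuousWithinAt.tendsto_nhdsWithin fun _ hu => hu

/-- Confluent determinant representation of `₀F̃₀(Λ, W)` (Lemma 3 of
Chiani–Win–Shin).  Let `λ₁ > … > λ_m` and fix distinct values `wf j ≠ w` for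
the indices outside the group `{k, …, k+L-1}`.  As the `L` grouped arguments
tend to a common value `w` through tuples making all `m` arguments distinct,
`det[e^{λᵢ w_j}] / (∏_{i<j}(λᵢ−λ_j) ∏_{i<j}(wᵢ−w_j))` tends to
`det G / (∏_{i=1}^{L-1} i! · ∏_{i<j}(λᵢ−λ_j) · ∏_{i<j, cᵢ≠c_j}(cᵢ−c_j))`,
where the columns of `G` in the group are
`λᵢ^{L-1} e^{λᵢ w}, …, λᵢ e^{λᵢ w}, e^{λᵢ w}` and the remaining columns are
`e^{λᵢ wf_j}`. -/
theorem stmt_2 (m L k : ℕ) (hkL : k + L ≤ m)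
    (lam : Fin m → ℝ) (w : ℝ)
    (wf : Fin m → ℝ)
    (hdist : ∀ j j' : Fin m, ¬(k ≤ (j : ℕ) ∧ (j : ℕ) < k + L) →
      ¬(k ≤ (j' : ℕ) ∧ (j' : ℕ) < k + L) → j ≠ j' → wf j ≠ wf j')
    (hne : ∀ j : Fin m, ¬(k ≤ (j : ℕ) ∧ (j : ℕ) < k + L) → wf j ≠ w) :
    Tendsto
      (fun u : Fin L → ℝ =>
        (Matrix.det (Matrix.of fun i j : Fin m =>
            Real.exp (lam i *
              (if h : k ≤ (j : ℕ) ∧ (j : ℕ) < k + L then u ⟨(j : ℕ) - k, by omega⟩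
               else wf j)))) /
          ((∏ p ∈ Finset.univ.filter (fun p : Fin m × Fin m => p.1 < p.2),
              (lam p.1 - lam p.2)) *
            ∏ p ∈ Finset.univ.filter (fun p : Fin m × Fin m => p.1 < p.2),
              ((if h : k ≤ (p.1 : ℕ) ∧ (p.1 : ℕ) < k + L then u ⟨(p.1 : ℕ) - k, by omega⟩
                else wf p.1) -
               (if h : k ≤ (p.2 : ℕ) ∧ (p.2 : ℕ) < k + L then u ⟨(p.2 : ℕ) - k, by omega⟩
                else wf p.2))))
      (𝓝[{u : Fin L → ℝ |
          Function.Injective (fun j : Fin m =>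
            if h : k ≤ (j : ℕ) ∧ (j : ℕ) < k + L then u ⟨(j : ℕ) - k, by omega⟩
            else wf j)}] (fun _ => w))
      (𝓝 ((Matrix.det (Matrix.of fun i j : Fin m =>
              if k ≤ (j : ℕ) ∧ (j : ℕ) < k + L then
                lam i ^ (k + L - 1 - (j : ℕ)) * Real.exp (lam i * w)
              else Real.exp (lam i * wf j))) /
            ((∏ i ∈ Finset.range L, (Nat.factorial i : ℝ)) *
              ((∏ p ∈ Finset.univ.filter (fun p : Fin m × Fin m => p.1 < p.2),
                  (lam p.1 - lam p.2)) *
                ∏ p ∈ Finset.univ.filter (fun p : Fin m × Fin m =>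
                    p.1 < p.2 ∧
                      (if k ≤ (p.1 : ℕ) ∧ (p.1 : ℕ) < k + L then w else wf p.1) ≠
                        (if k ≤ (p.2 : ℕ) ∧ (p.2 : ℕ) < k + L then w else wf p.2)),
                  ((if k ≤ (p.1 : ℕ) ∧ (p.1 : ℕ) < k + L then w else wf p.1) -
                    (if k ≤ (p.2 : ℕ) ∧ (p.2 : ℕ) < k + L then w else wf p.2)))))) := by
  set s : Finset (Fin m) := {j | k ≤ (j : ℕ) ∧ (j : ℕ) < k + L} with hs
  have hmem (j : Fin m) : j ∈ s ↔ k ≤ (j : ℕ) ∧ (j : ℕ) < k + L := by simp [hs]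
  set y₀ : Fin m → ℝ := fun j => if k ≤ (j : ℕ) ∧ (j : ℕ) < k + L then w else wf j with hy₀
  have hout (c : Fin m) (hc : c ∉ s) : y₀ c = wf c := if_neg ((hmem c).not.1 hc)
  have hlim := tendsto_det_exp_div_prod_sub_of_forall_eq lam s (y₀ := y₀) (w := w)
    (fun c hc => if_pos ((hmem c).1 hc)) (fun c hc => hout c hc ▸ hne c ((hmem c).not.1 hc))
    fun c hc c' hc' h => by_contra fun hcc' => hdist c c' ((hmem c).not.1 hc)
      ((hmem c').not.1 hc') hcc' (hout c hc ▸ hout c' hc' ▸ h)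
  have hcard : #s = L := by rw [hs, card_filter_fin_le_lt k (k + L) hkL, Nat.add_sub_cancel_left]
  have hG : (of fun i j : Fin m => if k ≤ (j : ℕ) ∧ (j : ℕ) < k + L then
        lam i ^ (k + L - 1 - (j : ℕ)) * Real.exp (lam i * w) else Real.exp (lam i * wf j)) =
      of fun i j => if j ∈ s then lam i ^ #{c ∈ s | j < c} * Real.exp (lam i * w)
        else Real.exp (lam i * y₀ j) := by
    ext i j
    by_cases hj : k ≤ (j : ℕ) ∧ (j : ℕ) < k + L
    · simp [hj, hs, card_filter_fin_lt_of_le hkL hj.1]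
    · simp [hj, hmem, hy₀]
  convert (hlim.comp (tendsto_spliceBlock k wf w)).div_const
    (∏ p ∈ univ.filter (fun p : Fin m × Fin m => p.1 < p.2), (lam p.1 - lam p.2)) using 2
  · simp only [Function.comp_apply, spliceBlock]
    ring
  · rfl
  · rw [hG, hcard]
    ring
end

section
/- For every nonnegative integer m and real μ > 0, ∫_0^∞ x^m e^{−μx} ln(1+x) dx = m! · e^{μ} · Σ_{i=0}^{m} Γ(i−m, μ) / μ^{i+1}, where Γ(a, μ) = ∫_μ^∞ t^{a−1} e^{−t} dt is the upper incomplete Gamma function. -/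
/-!
Differentiating `x ^ m * exp (-μ * x) * log (1 + x)` and integrating over `(0, ∞)` gives
`μ L_m = m L_{m-1} + J_m`, where `L_m = ∫ x^m e^{-μx} log (1 + x)` and
`J_m = ∫ x^m e^{-μx} / (1 + x)`. The substitution `t = μ (1 + x)` gives
`J_0 = e^μ Γ(0, μ)`, and `x^{m+1} / (1 + x) = x^m - x^m / (1 + x)` together with
`Γ(a + 1, μ) = a Γ(a, μ) + μ^a e^{-μ}` gives `J_m = m! e^μ Γ(-m, μ)`. Unrolling the recursion
for `L_m` produces the sum.
-/

open MeasureTheory Real Finset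

/-- The upper incomplete Gamma function `Γ(a, μ) = ∫_μ^∞ t^{a−1} e^{−t} dt`,
defined for real `a` and `μ > 0` by the convergent integral. -/
noncomputable def upperIncompleteGamma (a μ : ℝ) : ℝ :=
  ∫ t in Set.Ioi μ, t ^ (a - 1) * Real.exp (-t)

open Filter Set
open scoped Nat Topology

section

variable {μ : ℝ}

lemma integrableOn_pow_mul_exp_neg_mul (hμ : 0 < μ) (k : ℕ) :
    IntegrableOn (fun x : ℝ => x ^ k * exp (-μ * x)) (Ioi 0) := by
  simpa using integrableOn_rpow_mul_exp_neg_mul_rpow (s := k) (p := 1)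
    (by linarith [k.cast_nonneg (α := ℝ)]) one_pos hμ

lemma integral_pow_mul_exp_neg_mul (hμ : 0 < μ) (k : ℕ) :
    ∫ x in Ioi 0, x ^ k * exp (-μ * x) = k ! / μ ^ (k + 1) := by
  have h := integral_rpow_mul_exp_neg_mul_Ioi (a := (k : ℝ) + 1) (by positivity) hμ
  simp only [add_sub_cancel_right, rpow_natCast, ← neg_mul] at h
  rw [h, Gamma_nat_eq_factorial, ← Nat.cast_succ, rpow_natCast, one_div_pow, one_div_mul_eq_div]

lemma pow_mul_exp_neg_mul_mul_log_one_add_le {x : ℝ} (hx : 0 ≤ x) (k : ℕ) :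
    x ^ k * exp (-μ * x) * log (1 + x) ≤ x ^ (k + 1) * exp (-μ * x) := by
  have hlog : log (1 + x) ≤ x := by linarith [log_le_sub_one_of_pos (by linarith : 0 < 1 + x)]
  calc x ^ k * exp (-μ * x) * log (1 + x) ≤ x ^ k * exp (-μ * x) * x := by gcongr
    _ = x ^ (k + 1) * exp (-μ * x) := by ring

lemma integrableOn_pow_mul_exp_neg_mul_div_one_add (hμ : 0 < μ) (k : ℕ) :
    IntegrableOn (fun x : ℝ => x ^ k * exp (-μ * x) / (1 + x)) (Ioi 0) := by
  refine (integrableOn_pow_mul_exp_neg_mul hμ k).mono'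
    (by fun_prop : Measurable _).aestronglyMeasurable ?_
  filter_upwards [ae_restrict_mem measurableSet_Ioi] with x (hx : 0 < x)
  rw [norm_of_nonneg (by positivity)]
  exact div_le_self (by positivity) (by linarith)

lemma integrableOn_pow_mul_exp_neg_mul_mul_log_one_add (hμ : 0 < μ) (k : ℕ) :
    IntegrableOn (fun x : ℝ => x ^ k * exp (-μ * x) * log (1 + x)) (Ioi 0) := by
  refine (integrableOn_pow_mul_exp_neg_mul hμ (k + 1)).mono'
    (by fun_prop : Measurable _).aestronglyMeasurable ?_
  filter_upwards [ae_restrict_mem measurableSet_Ioi] with x (hx : 0 < x)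
  have : 0 ≤ log (1 + x) := log_nonneg (by linarith)
  rw [norm_of_nonneg (by positivity)]
  exact pow_mul_exp_neg_mul_mul_log_one_add_le hx.le k

lemma integrableOn_rpow_mul_exp_neg (hμ : 0 < μ) (a : ℝ) :
    IntegrableOn (fun t : ℝ => t ^ a * exp (-t)) (Ioi μ) :=
  integrable_of_isBigO_exp_neg one_half_pos
    (fun t ht => ((continuousAt_rpow_const t a (Or.inl (hμ.trans_le ht).ne')).mul
      (continuous_exp.comp continuous_neg).continuousAt).continuousWithinAt)
    (by simpa only [mul_comm] using (Gamma_integrand_isLittleO a).isBigO)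

theorem upperIncompleteGamma_add_one (hμ : 0 < μ) (a : ℝ) :
    upperIncompleteGamma (a + 1) μ = a * upperIncompleteGamma a μ + μ ^ a * exp (-μ) := by
  have hderiv : ∀ t ∈ Ici μ, HasDerivAt (fun t => -(t ^ a * exp (-t)))
      (t ^ a * exp (-t) - a * (t ^ (a - 1) * exp (-t))) t := by
    intro t ht
    refine (((hasDerivAt_rpow_const (Or.inl (hμ.trans_le ht).ne')).mul
      (hasDerivAt_neg t).exp).neg).congr_deriv ?_
    ring
  have htendsto : Tendsto (fun t => -(t ^ a * exp (-t))) atTop (𝓝 0) := by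
    simpa using (tendsto_rpow_mul_exp_neg_mul_atTop_nhds_zero a 1 one_pos).neg
  have hint := integrableOn_rpow_mul_exp_neg hμ a
  have hint' := (integrableOn_rpow_mul_exp_neg hμ (a - 1)).const_mul a
  have h := integral_Ioi_of_hasDerivAt_of_tendsto' hderiv (hint.sub hint') htendsto
  rw [integral_sub hint hint', integral_const_mul] at h
  simp only [upperIncompleteGamma, add_sub_cancel_right]
  linarith

theorem upperIncompleteGamma_eq_integral_one_add_rpow (hμ : 0 < μ) (a : ℝ) :
    upperIncompleteGamma a μ =
      μ ^ a * exp (-μ) * ∫ x in Ioi 0, (1 + x) ^ (a - 1) * exp (-μ * x) := by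
  set g : ℝ → ℝ := fun t => t ^ (a - 1) * exp (-t)
  have hscale := integral_comp_mul_left_Ioi g 1 hμ
  have hshift := (measurePreserving_add_left volume (1 : ℝ)).setIntegral_preimage_emb
    (measurableEmbedding_addLeft 1) (fun s => g (μ * s)) (Ioi 1)
  simp only [mul_one, preimage_const_add_Ioi, sub_self] at hscale hshift
  have hsubst : ∫ t in Ioi μ, g t = μ * ∫ x in Ioi 0, g (μ * (1 + x)) := by
    rw [hshift, hscale, smul_eq_mul, mul_inv_cancel_left₀ hμ.ne']
  have hg : ∀ x ∈ Ioi (0 : ℝ),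
      g (μ * (1 + x)) = μ ^ (a - 1) * exp (-μ) * ((1 + x) ^ (a - 1) * exp (-μ * x)) := by
    intro x (hx : 0 < x)
    simp only [g]
    rw [mul_rpow hμ.le (by linarith), mul_add, mul_one, neg_add, exp_add, neg_mul]
    ring
  rw [upperIncompleteGamma, hsubst, setIntegral_congr_fun measurableSet_Ioi hg,
    integral_const_mul, rpow_sub_one hμ.ne']
  field_simp

theorem integral_pow_mul_exp_neg_mul_div_one_add (hμ : 0 < μ) (k : ℕ) :
    ∫ x in Ioi 0, x ^ k * exp (-μ * x) / (1 + x) =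
      k ! * exp μ * upperIncompleteGamma (-k) μ := by
  induction k with
  | zero =>
    rw [upperIncompleteGamma_eq_integral_one_add_rpow hμ]
    simp [rpow_neg_one, ← mul_assoc, ← exp_add, div_eq_inv_mul]
  | succ k ih =>
    have hsplit : ∀ x ∈ Ioi (0 : ℝ), x ^ (k + 1) * exp (-μ * x) / (1 + x) =
        x ^ k * exp (-μ * x) - x ^ k * exp (-μ * x) / (1 + x) := by
      intro x (hx : 0 < x)
      field_simp
      ring
    have hrec := upperIncompleteGamma_add_one hμ (-(k + 1 : ℕ))
    rw [show -((k + 1 : ℕ) : ℝ) + 1 = -k by push_cast; ring, rpow_neg hμ.le,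
      rpow_natCast] at hrec
    rw [setIntegral_congr_fun measurableSet_Ioi hsplit,
      integral_sub (integrableOn_pow_mul_exp_neg_mul hμ k)
        (integrableOn_pow_mul_exp_neg_mul_div_one_add hμ k),
      integral_pow_mul_exp_neg_mul hμ, ih, hrec, Nat.factorial_succ]
    have hexp : exp μ * exp (-μ) = 1 := by rw [← exp_add, add_neg_cancel, exp_zero]
    push_cast
    field_simp
    linear_combination -hexp

-- At `m = 0` the truncated `m - 1` is harmless: that term carries the factor `m = 0`.
theorem mul_integral_pow_mul_exp_neg_mul_mul_log_one_add (hμ : 0 < μ) (m : ℕ) :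
    μ * ∫ x in Ioi 0, x ^ m * exp (-μ * x) * log (1 + x) =
      m * (∫ x in Ioi 0, x ^ (m - 1) * exp (-μ * x) * log (1 + x)) +
        ∫ x in Ioi 0, x ^ m * exp (-μ * x) / (1 + x) := by
  have hderiv : ∀ x ∈ Ici (0 : ℝ), HasDerivAt (fun x => x ^ m * exp (-μ * x) * log (1 + x))
      (m * (x ^ (m - 1) * exp (-μ * x) * log (1 + x)) - μ * (x ^ m * exp (-μ * x) * log (1 + x))
        + x ^ m * exp (-μ * x) / (1 + x)) x := by
    intro x (hx : 0 ≤ x)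
    have hlog : HasDerivAt (fun x => log (1 + x)) (1 / (1 + x)) x := by
      simpa using ((hasDerivAt_id x).const_add 1).log (by positivity)
    refine (((hasDerivAt_pow m x).mul ((hasDerivAt_id x).const_mul (-μ)).exp).mul
      hlog).congr_deriv ?_
    simp only [id, Pi.mul_apply]
    ring
  have htendsto : Tendsto (fun x => x ^ m * exp (-μ * x) * log (1 + x)) atTop (𝓝 0) := by
    have hdecay : Tendsto (fun x : ℝ => x ^ (m + 1) * exp (-μ * x)) atTop (𝓝 0) := by
      simpa only [rpow_natCast] using
        tendsto_rpow_mul_exp_neg_mul_atTop_nhds_zero ((m + 1 : ℕ) : ℝ) μ hμ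
    refine squeeze_zero' ?_ ?_ hdecay
    · filter_upwards [eventually_ge_atTop 0] with x hx
      have : 0 ≤ log (1 + x) := log_nonneg (by linarith)
      positivity
    · filter_upwards [eventually_ge_atTop 0] with x hx
      exact pow_mul_exp_neg_mul_mul_log_one_add_le hx m
  have hintL := integrableOn_pow_mul_exp_neg_mul_mul_log_one_add hμ
  have hintJ := integrableOn_pow_mul_exp_neg_mul_div_one_add hμ m
  have hintLL : IntegrableOn (fun x => m * (x ^ (m - 1) * exp (-μ * x) * log (1 + x)) -
      μ * (x ^ m * exp (-μ * x) * log (1 + x))) (Ioi 0) :=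
    ((hintL (m - 1)).const_mul m).sub ((hintL m).const_mul μ)
  have h := integral_Ioi_of_hasDerivAt_of_tendsto' hderiv (hintLL.add hintJ) htendsto
  rw [integral_add hintLL hintJ,
    integral_sub ((hintL (m - 1)).const_mul m) ((hintL m).const_mul μ),
    integral_const_mul, integral_const_mul] at h
  simp only [add_zero, log_one, mul_zero, sub_zero] at h
  linarith

lemma mul_sum_range_div_pow_succ (hμ : μ ≠ 0) (f : ℝ → ℝ) (m : ℕ) :
    μ * ∑ i ∈ range (m + 1 + 1), f (i - (m + 1 : ℕ)) / μ ^ (i + 1) =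
      f (-(m + 1 : ℕ)) + ∑ i ∈ range (m + 1), f (i - m) / μ ^ (i + 1) := by
  rw [sum_range_succ', mul_add, add_comm, mul_sum]
  congr 1
  · rw [zero_add, pow_one, mul_div_cancel₀ _ hμ, Nat.cast_zero, zero_sub]
  · refine sum_congr rfl fun i _ => ?_
    rw [pow_succ, ← div_div, mul_div_cancel₀ _ hμ, Nat.cast_succ, Nat.cast_succ,
      add_sub_add_right_eq_sub]

end

/-- For every nonnegative integer `m` and real `μ > 0`,
`∫_0^∞ x^m e^{−μx} ln(1+x) dx = m! · e^μ · Σ_{i=0}^m Γ(i−m, μ) / μ^{i+1}`,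
where `Γ(·,·)` is the upper incomplete Gamma function. -/
theorem stmt_7 (m : ℕ) (μ : ℝ) (hμ : 0 < μ) :
    ∫ x in Set.Ioi (0 : ℝ), x ^ m * Real.exp (-μ * x) * Real.log (1 + x) =
      (Nat.factorial m : ℝ) * Real.exp μ *
        ∑ i ∈ Finset.range (m + 1),
          upperIncompleteGamma ((i : ℝ) - m) μ / μ ^ (i + 1) := by
  induction m with
  | zero =>
    refine mul_left_cancel₀ hμ.ne' ?_
    rw [mul_integral_pow_mul_exp_neg_mul_mul_log_one_add hμ 0,
      integral_pow_mul_exp_neg_mul_div_one_add hμ 0]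
    simp only [CharP.cast_eq_zero, zero_mul, zero_add, Nat.factorial_zero, Nat.cast_one, one_mul,
      range_one, sum_singleton, pow_one, sub_zero, neg_zero]
    field_simp
  | succ m ih =>
    refine mul_left_cancel₀ hμ.ne' ?_
    rw [mul_integral_pow_mul_exp_neg_mul_mul_log_one_add hμ (m + 1), Nat.add_sub_cancel, ih,
      integral_pow_mul_exp_neg_mul_div_one_add hμ, mul_left_comm μ,
      mul_sum_range_div_pow_succ hμ.ne' (upperIncompleteGamma · μ), Nat.factorial_succ]
    push_cast
    ring
end

section
/- Let Φ : fin p → ℝ → ℝ and Ψ : fin n → ℝ → ℝ with n ≥ p, let Ψ_{i,j} be real constants for j = p+1,…,n, and let ξ, ξ̃ : ℝ → ℝ be functions such that all integrals below exist. Then ∫_{b ≥ x_1 ≥ … ≥ x_p ≥ a} det[Φ_i(x_j)]_{p×p} · det[M(x)]_{n×n} · (∏_{m=1}^p ξ(x_m)) · (Σ_{i=1}^p ξ̃(x_i)) dx = Σ_{k=1}^p det C^{(k)}, where M(x) has entries Ψ_i(x_j) for j ≤ p and Ψ_{i,j} for j > p, and the n×n matrix C^{(k)} has entries c^{(k)}_{i,j}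 = ∫_a^b Φ_i(x) Ψ_j(x) ξ(x) ξ̃(x)^{[j=k]} dx for j ≤ p (the factor ξ̃(x) present only when j = k) and c^{(k)}_{i,j} = Ψ_{i,j} for j > p. Here only the first p rows index of Φ appear in the p×p determinant with columns x_1,…,x_p. -/
/-!
Write the integrand as `det[Φᵢ(x_j)] · G(x)` with `G(x) = det M(x) · ∏ ξ(x_m) · Σ ξ̃(x_i)`; `G`
changes sign under every transposition of the variables, so the integrand is symmetric. The cube
`[a, b]^p` is covered by the `p!` permuted copies of the ordered simplex, which overlap only on the
null set of tuples with a repeated coordinate, so the cube integral is `p!` times the simplex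
integral. Expanding `det[Φᵢ(x_j)]` over permutations and undoing each permutation by the
antisymmetry of `G`, the cube integral is also `p!` times that of `∏ Φᵢ(xᵢ) · G(x)`. Finally
`∏ ξ(x_m) · Σ_k ξ̃(x_k)` is a sum over `k` of products of one-variable weights, and for each `k`
Fubini, applied to each term of the Leibniz expansion of `det M(x)`, integrates the first `p`
columns one variable at a time, which produces `det C^{(k)}`.
-/

open MeasureTheory Matrix Finset

section PermuteCoordinates

variable {ι α : Type*}

lemma preimage_comp_perm_univ_pi (σ : Equiv.Perm ι) (s : Set α) :
    (fun x : ι → α => x ∘ σ) ⁻¹' Set.univ.pi (fun _ => s) = Set.univ.pi (fun _ => s) := by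
  ext x
  simpa [Set.mem_univ_pi] using σ.forall_congr_right (q := fun i => x i ∈ s)

lemma measurableEmbedding_comp_perm [MeasurableSpace α] (σ : Equiv.Perm ι) :
    MeasurableEmbedding (fun x : ι → α => x ∘ σ) :=
  (MeasurableEquiv.arrowCongr' σ.symm (MeasurableEquiv.refl α)).measurableEmbedding

variable [Fintype ι] [MeasureSpace α] [SigmaFinite (volume : Measure α)]

lemma measurePreserving_comp_perm (σ : Equiv.Perm ι) :
    MeasurePreserving (fun x : ι → α => x ∘ σ) volume volume :=
  volume_preserving_arrowCongr' σ.symm (MeasurableEquiv.refl α) (.id volume)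

variable {E : Type*} [NormedAddCommGroup E]

lemma setIntegral_univ_pi_comp_perm [NormedSpace ℝ E] (σ : Equiv.Perm ι) (s : Set α)
    (f : (ι → α) → E) :
    ∫ x in Set.univ.pi (fun _ => s), f (x ∘ σ) = ∫ x in Set.univ.pi (fun _ => s), f x := by
  conv_lhs => rw [← preimage_comp_perm_univ_pi σ s]
  exact (measurePreserving_comp_perm σ).setIntegral_preimage_emb
    (measurableEmbedding_comp_perm σ) f _

lemma integrableOn_univ_pi_comp_perm_iff (σ : Equiv.Perm ι) (s : Set α) {f : (ι → α) → E} :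
    IntegrableOn (fun x => f (x ∘ σ)) (Set.univ.pi fun _ => s) ↔
      IntegrableOn f (Set.univ.pi fun _ => s) := by
  conv_lhs => rw [← preimage_comp_perm_univ_pi σ s]
  exact (measurePreserving_comp_perm σ).integrableOn_comp_preimage
    (measurableEmbedding_comp_perm σ)

end PermuteCoordinates

section ProductIntegrals

variable {ι α 𝕜 : Type*} [Fintype ι] [MeasureSpace α] [SigmaFinite (volume : Measure α)]
  [RCLike 𝕜]

lemma integrableOn_univ_pi_prod {s : Set α} {g : ι → α → 𝕜}
    (hg : ∀ i, IntegrableOn (g i) s) :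
    IntegrableOn (fun x => ∏ i, g i (x i)) (Set.univ.pi fun _ => s) := by
  rw [IntegrableOn, volume_pi, Measure.restrict_pi_pi]
  exact .fintype_prod hg

lemma setIntegral_univ_pi_prod (s : Set α) (g : ι → α → 𝕜) :
    ∫ x in Set.univ.pi (fun _ => s), ∏ i, g i (x i) = ∏ i, ∫ t in s, g i t := by
  rw [volume_pi, Measure.restrict_pi_pi]
  exact integral_fintype_prod_eq_prod g

end ProductIntegrals

section OrderedSimplex

lemma volume_setOf_not_injective {ι : Type*} [Fintype ι] :
    volume {x : ι → ℝ | ¬ Function.Injective x} = 0 := by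
  classical
  let D : ι → ι → (ι → ℝ) →ₗ[ℝ] ℝ := fun i j =>
    (LinearMap.proj i : (ι → ℝ) →ₗ[ℝ] ℝ) - LinearMap.proj j
  have hsub : {x : ι → ℝ | ¬ Function.Injective x} ⊆
      ⋃ (i : ι) (j : ι) (_ : i ≠ j), (LinearMap.ker (D i j) : Set (ι → ℝ)) := by
    intro x hx
    obtain ⟨i, j, hij, hne⟩ : ∃ i j, x i = x j ∧ i ≠ j := by
      simpa [Function.Injective] using hx
    simp only [Set.mem_iUnion, SetLike.mem_coe, LinearMap.mem_ker]
    exact ⟨i, j, hne, by simp [D, hij]⟩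
  refine measure_mono_null hsub <| measure_iUnion_null fun i => measure_iUnion_null fun j =>
    measure_iUnion_null fun hij => Measure.addHaar_submodule _ _ fun htop => ?_
  have : Pi.single i (1 : ℝ) ∈ LinearMap.ker (D i j) := htop ▸ Submodule.mem_top
  simp [D, Pi.single_eq_of_ne' hij] at this

variable {p : ℕ}

lemma perm_eq_of_antitone_comp {x : Fin p → ℝ} (hx : Function.Injective x)
    {σ τ : Equiv.Perm (Fin p)} (hσ : Antitone (x ∘ σ)) (hτ : Antitone (x ∘ τ)) : σ = τ := by
  have h := Tuple.unique_monotone (f := OrderDual.toDual ∘ x)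
    (monotone_toDual_comp_iff.2 hσ) (monotone_toDual_comp_iff.2 hτ)
  exact Equiv.ext fun i => hx (congrFun h i)

lemma exists_antitone_comp_perm (x : Fin p → ℝ) :
    ∃ σ : Equiv.Perm (Fin p), Antitone (x ∘ σ) :=
  ⟨_, monotone_toDual_comp_iff.1 (Tuple.monotone_sort (OrderDual.toDual ∘ x))⟩

lemma measurableSet_setOf_antitone_mem {s : Set ℝ} (hs : MeasurableSet s) :
    MeasurableSet {x : Fin p → ℝ | Antitone x ∧ ∀ i, x i ∈ s} := by
  have : {x : Fin p → ℝ | Antitone x ∧ ∀ i, x i ∈ s} =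
      (⋂ (i : Fin p) (j : Fin p) (_ : i ≤ j), {x | x j ≤ x i}) ∩ Set.univ.pi fun _ => s := by
    ext x
    simp [Antitone]
  rw [this]
  exact .inter (.iInter fun i => .iInter fun j => .iInter fun _ =>
    measurableSet_le (measurable_pi_apply j) (measurable_pi_apply i)) (.univ_pi fun _ => hs)

theorem setIntegral_univ_pi_eq_factorial_smul_antitone {E : Type*} [NormedAddCommGroup E]
    [NormedSpace ℝ E] {s : Set ℝ} (hs : MeasurableSet s) {F : (Fin p → ℝ) → E}
    (hF : IntegrableOn F (Set.univ.pi fun _ => s))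
    (hsymm : ∀ (σ : Equiv.Perm (Fin p)) x, F (x ∘ σ) = F x) :
    ∫ x in Set.univ.pi (fun _ => s), F x =
      p.factorial • ∫ x in {x : Fin p → ℝ | Antitone x ∧ ∀ i, x i ∈ s}, F x := by
  set S := {x : Fin p → ℝ | Antitone x ∧ ∀ i, x i ∈ s}
  have hcover : Set.univ.pi (fun _ => s) = ⋃ σ : Equiv.Perm (Fin p), (· ∘ σ) ⁻¹' S := by
    ext x
    simp only [Set.mem_univ_pi, Set.mem_iUnion, Set.mem_preimage, S]
    refine ⟨fun hx => ?_, fun ⟨σ, _, hx⟩ i => by simpa using hx (σ.symm i)⟩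
    obtain ⟨σ, hσ⟩ := exists_antitone_comp_perm x
    exact ⟨σ, hσ, fun i => hx (σ i)⟩
  have hdisj : Pairwise (Function.onFun (AEDisjoint volume)
      fun σ : Equiv.Perm (Fin p) => (· ∘ σ) ⁻¹' S) := fun σ τ hne =>
    measure_mono_null (t := {x | ¬ Function.Injective x})
      (fun x ⟨hσ, hτ⟩ hx => hne (perm_eq_of_antitone_comp hx hσ.1 hτ.1))
      volume_setOf_not_injective
  have hpiece (σ : Equiv.Perm (Fin p)) : ∫ x in (· ∘ σ) ⁻¹' S, F x = ∫ x in S, F x := by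
    simpa only [hsymm] using (measurePreserving_comp_perm σ).setIntegral_preimage_emb
      (measurableEmbedding_comp_perm σ) F S
  rw [hcover, integral_iUnion_ae (fun σ => ((measurableSet_setOf_antitone_mem hs).preimage
      (measurePreserving_comp_perm σ).measurable).nullMeasurableSet) hdisj (hcover ▸ hF),
    tsum_fintype, Finset.sum_congr rfl fun σ _ => hpiece σ, Finset.sum_const, Finset.card_univ,
    Fintype.card_perm, Fintype.card_fin]

end OrderedSimplex

section Alternating

lemma cast_units_mul_self {R : Type*} [Ring R] (u : ℤˣ) : ((u : ℤ) : R) * (u : ℤ) = 1 := by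
  rw [← Int.cast_mul, ← Units.val_mul, Int.units_mul_self, Units.val_one, Int.cast_one]

variable {ι α R : Type*} [Fintype ι] [DecidableEq ι] [CommRing R]

lemma det_of_comp_perm (Φ : ι → α → R) (σ : Equiv.Perm ι) (x : ι → α) :
    det (of fun i j => Φ i ((x ∘ σ) j)) = Equiv.Perm.sign σ * det (of fun i j => Φ i (x j)) :=
  det_permute' σ (of fun i j => Φ i (x j))

lemma det_of_mul_eq_sum_comp_perm (Φ : ι → α → R) {G : (ι → α) → R}
    (hG : ∀ (σ : Equiv.Perm ι) x, G (x ∘ σ) = Equiv.Perm.sign σ * G x) (x : ι → α) :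
    det (of fun i j => Φ i (x j)) * G x =
      ∑ σ : Equiv.Perm ι, (∏ i, Φ i (x (σ i))) * G (x ∘ σ) := by
  rw [← det_transpose, det_apply', Finset.sum_mul]
  refine Finset.sum_congr rfl fun σ _ => ?_
  rw [hG]
  simp only [transpose_apply, of_apply]
  ring

end Alternating

theorem setIntegral_antitone_det_mul {p : ℕ} {s : Set ℝ} (hs : MeasurableSet s)
    (Φ : Fin p → ℝ → ℝ) {G : (Fin p → ℝ) → ℝ}
    (hG : ∀ (σ : Equiv.Perm (Fin p)) x, G (x ∘ σ) = Equiv.Perm.sign σ * G x)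
    (hint : IntegrableOn (fun x => (∏ i, Φ i (x i)) * G x) (Set.univ.pi fun _ => s)) :
    ∫ x in {x : Fin p → ℝ | Antitone x ∧ ∀ i, x i ∈ s}, det (of fun i j => Φ i (x j)) * G x =
      ∫ x in Set.univ.pi (fun _ => s), (∏ i, Φ i (x i)) * G x := by
  set H : (Fin p → ℝ) → ℝ := fun x => (∏ i, Φ i (x i)) * G x
  have hexpand (x : Fin p → ℝ) :
      det (of fun i j => Φ i (x j)) * G x = ∑ σ : Equiv.Perm (Fin p), H (x ∘ σ) :=
    det_of_mul_eq_sum_comp_perm Φ hG x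
  have hsymm (σ : Equiv.Perm (Fin p)) (x : Fin p → ℝ) :
      det (of fun i j => Φ i ((x ∘ σ) j)) * G (x ∘ σ) =
        det (of fun i j => Φ i (x j)) * G x := by
    rw [det_of_comp_perm, hG]
    linear_combination (det (of fun i j => Φ i (x j)) * G x) *
      cast_units_mul_self (R := ℝ) (Equiv.Perm.sign σ)
  have hint_det : IntegrableOn (fun x => det (of fun i j => Φ i (x j)) * G x)
      (Set.univ.pi fun _ => s) := by
    simp_rw [hexpand]
    exact integrable_finsetSum _ fun σ _ => (integrableOn_univ_pi_comp_perm_iff σ s).2 hint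
  have hcube : ∫ x in Set.univ.pi (fun _ => s), det (of fun i j => Φ i (x j)) * G x =
      p.factorial • ∫ x in Set.univ.pi (fun _ => s), H x := by
    simp_rw [hexpand]
    rw [integral_finsetSum _ fun σ _ => (integrableOn_univ_pi_comp_perm_iff σ s).2 hint]
    simp only [setIntegral_univ_pi_comp_perm _ s H, Finset.sum_const, Finset.card_univ,
      Fintype.card_perm, Fintype.card_fin]
  have h := setIntegral_univ_pi_eq_factorial_smul_antitone hs hint_det hsymm
  rw [hcube, nsmul_eq_mul, nsmul_eq_mul] at h
  exact (mul_left_cancel₀ (by positivity) h).symm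

def borderedMatrix {R : Type*} {n p : ℕ} (A : Fin n → Fin p → R) (B : Fin n → Fin n → R) :
    Matrix (Fin n) (Fin n) R :=
  of fun i j => if h : (j : ℕ) < p then A i ⟨j, h⟩ else B i j

section BorderedMatrix

variable {R : Type*} [CommRing R] {p m : ℕ}

lemma det_borderedMatrix (A : Fin (p + m) → Fin p → R) (B : Fin (p + m) → Fin (p + m) → R) :
    det (borderedMatrix A B) = ∑ τ : Equiv.Perm (Fin (p + m)), Equiv.Perm.sign τ *
      ((∏ j : Fin p, A (τ (Fin.castAdd m j)) j) *
        ∏ j : Fin m, B (τ (Fin.natAdd p j)) (Fin.natAdd p j)) := by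
  rw [det_apply']
  refine Finset.sum_congr rfl fun τ _ => ?_
  rw [Fin.prod_univ_add]
  simp [borderedMatrix]

lemma det_borderedMatrix_comp_perm (A : Fin (p + m) → Fin p → R)
    (B : Fin (p + m) → Fin (p + m) → R) (σ : Equiv.Perm (Fin p)) :
    det (borderedMatrix (fun i j => A i (σ j)) B) =
      Equiv.Perm.sign σ * det (borderedMatrix A B) := by
  have h : borderedMatrix (fun i j => A i (σ j)) B =
      (borderedMatrix A B).submatrix id (σ.viaFintypeEmbedding (Fin.castAddEmb m)) := by
    ext i j
    induction j using Fin.addCases with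
    | left j =>
      have := σ.viaFintypeEmbedding_apply_image (Fin.castAddEmb m) j
      simp_all [borderedMatrix]
    | right j =>
      have : σ.viaFintypeEmbedding (Fin.castAddEmb m) (Fin.natAdd p j) = Fin.natAdd p j :=
        σ.viaFintypeEmbedding_apply_notMem_range _ (by simp [Fin.ext_iff]; omega)
      simp_all [borderedMatrix]
  rw [h, det_permute', Equiv.Perm.viaFintypeEmbedding_sign]

variable (f : Fin p → ℝ → ℝ) (Ψ : Fin (p + m) → ℝ → ℝ) (B : Fin (p + m) → Fin (p + m) → ℝ)

lemma prod_mul_det_borderedMatrix_eq_sum (x : Fin p → ℝ) :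
    (∏ j, f j (x j)) * det (borderedMatrix (fun i j => Ψ i (x j)) B) =
      ∑ τ : Equiv.Perm (Fin (p + m)),
        (Equiv.Perm.sign τ * ∏ j : Fin m, B (τ (Fin.natAdd p j)) (Fin.natAdd p j)) *
          ∏ j, f j (x j) * Ψ (τ (Fin.castAdd m j)) (x j) := by
  rw [det_borderedMatrix, Finset.mul_sum]
  refine Finset.sum_congr rfl fun τ _ => ?_
  rw [Finset.prod_mul_distrib]
  ring

variable {s : Set ℝ} {f Ψ}

lemma integrableOn_prod_mul_det_borderedMatrix
    (hf : ∀ j i, IntegrableOn (fun t => f j t * Ψ i t) s) :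
    IntegrableOn (fun x => (∏ j, f j (x j)) * det (borderedMatrix (fun i j => Ψ i (x j)) B))
      (Set.univ.pi fun _ => s) := by
  simp_rw [prod_mul_det_borderedMatrix_eq_sum]
  exact integrable_finsetSum _ fun τ _ => (integrableOn_univ_pi_prod fun j => hf j _).const_mul _

lemma setIntegral_prod_mul_det_borderedMatrix
    (hf : ∀ j i, IntegrableOn (fun t => f j t * Ψ i t) s) :
    ∫ x in Set.univ.pi fun _ => s,
        (∏ j, f j (x j)) * det (borderedMatrix (fun i j => Ψ i (x j)) B) =
      det (borderedMatrix (fun i j => ∫ t in s, f j t * Ψ i t) B) := by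
  simp_rw [prod_mul_det_borderedMatrix_eq_sum]
  rw [integral_finsetSum _ fun τ _ => (integrableOn_univ_pi_prod fun j => hf j _).const_mul _,
    det_borderedMatrix]
  refine Finset.sum_congr rfl fun τ _ => ?_
  rw [integral_const_mul,
    setIntegral_univ_pi_prod s fun j t => f j t * Ψ (τ (Fin.castAdd m j)) t]
  ring

end BorderedMatrix

theorem setIntegral_antitone_det_mul_det_borderedMatrix_mul_sum_prod {p m : ℕ} {κ : Type*}
    [Fintype κ] {s : Set ℝ} (hs : MeasurableSet s) (Φ : Fin p → ℝ → ℝ)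
    (Ψ : Fin (p + m) → ℝ → ℝ) (B : Fin (p + m) → Fin (p + m) → ℝ) (v : κ → Fin p → ℝ → ℝ)
    (hv : ∀ (σ : Equiv.Perm (Fin p)) (x : Fin p → ℝ),
      ∑ k, ∏ j, v k j (x (σ j)) = ∑ k, ∏ j, v k j (x j))
    (hint : ∀ k j i, IntegrableOn (fun t => Φ j t * v k j t * Ψ i t) s) :
    ∫ x in {x : Fin p → ℝ | Antitone x ∧ ∀ i, x i ∈ s}, det (of fun i j => Φ i (x j)) *
        (det (borderedMatrix (fun i j => Ψ i (x j)) B) * ∑ k, ∏ j, v k j (x j)) =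
      ∑ k, det (borderedMatrix (fun i j => ∫ t in s, Φ j t * v k j t * Ψ i t) B) := by
  set G : (Fin p → ℝ) → ℝ := fun x =>
    det (borderedMatrix (fun i j => Ψ i (x j)) B) * ∑ k, ∏ j, v k j (x j)
  have hG (σ : Equiv.Perm (Fin p)) (x : Fin p → ℝ) :
      G (x ∘ σ) = Equiv.Perm.sign σ * G x := by
    simp only [G, Function.comp_apply]
    rw [det_borderedMatrix_comp_perm (fun i j => Ψ i (x j)), hv, mul_assoc]
  have hsplit (x : Fin p → ℝ) : (∏ i, Φ i (x i)) * G x =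
      ∑ k, (∏ j, Φ j (x j) * v k j (x j)) * det (borderedMatrix (fun i j => Ψ i (x j)) B) := by
    simp only [G, Finset.mul_sum, Finset.prod_mul_distrib]
    exact Finset.sum_congr rfl fun k _ => by ring
  have hint_cube :
      IntegrableOn (fun x => (∏ i, Φ i (x i)) * G x) (Set.univ.pi fun _ => s) := by
    rw [funext hsplit]
    exact integrable_finsetSum _ fun k _ => integrableOn_prod_mul_det_borderedMatrix B (hint k)
  rw [setIntegral_antitone_det_mul hs Φ hG hint_cube, funext hsplit,
    integral_finsetSum _ fun k _ => integrableOn_prod_mul_det_borderedMatrix B (hint k)]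
  exact Finset.sum_congr rfl fun k _ => setIntegral_prod_mul_det_borderedMatrix B (hint k)

lemma prod_mul_sum_eq_sum_prod_ite {ι R : Type*} [Fintype ι] [DecidableEq ι] [CommSemiring R]
    (f g : ι → R) : (∏ i, f i) * ∑ k, g k = ∑ k, ∏ i, f i * if i = k then g i else 1 := by
  simp only [Finset.mul_sum, Finset.prod_mul_distrib, Finset.prod_ite_eq', Finset.mem_univ,
    if_true]

theorem stmt_8_general (p n : ℕ) (hpn : p ≤ n) (a b : ℝ)
    (Φ : Fin p → ℝ → ℝ) (Ψ : Fin n → ℝ → ℝ) (Ψc : Fin n → Fin n → ℝ)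
    (ξ ξt : ℝ → ℝ)
    (hint : ∀ (j : Fin p) (i : Fin n),
      IntegrableOn (fun t => Φ j t * Ψ i t * ξ t) (Set.Icc a b))
    (hint' : ∀ (j : Fin p) (i : Fin n),
      IntegrableOn (fun t => Φ j t * Ψ i t * ξ t * ξt t) (Set.Icc a b)) :
    (∫ x in {x : Fin p → ℝ |
        (∀ i j : Fin p, i ≤ j → x j ≤ x i) ∧ ∀ i, x i ∈ Set.Icc a b},
      Matrix.det (Matrix.of fun i j : Fin p => Φ i (x j)) *
        Matrix.det (Matrix.of fun i j : Fin n =>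
          if h : (j : ℕ) < p then Ψ i (x ⟨j, h⟩) else Ψc i j) *
        (∏ m, ξ (x m)) * (∑ i, ξt (x i))) =
      ∑ k : Fin p,
        Matrix.det (Matrix.of fun i j : Fin n =>
          if h : (j : ℕ) < p then
            ∫ t in Set.Icc a b,
              Φ ⟨j, h⟩ t * Ψ i t * ξ t * (if (j : ℕ) = (k : ℕ) then ξt t else 1)
          else Ψc i j) := by
  obtain ⟨m, rfl⟩ := Nat.exists_eq_add_of_le hpn
  set v : Fin p → Fin p → ℝ → ℝ := fun k j t => ξ t * if j = k then ξt t else 1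
  have hv (x : Fin p → ℝ) : ∑ k, ∏ j, v k j (x j) = (∏ j, ξ (x j)) * ∑ j, ξt (x j) :=
    (prod_mul_sum_eq_sum_prod_ite _ _).symm
  have hentry (k j : Fin p) (i : Fin (p + m)) (t : ℝ) :
      Φ j t * v k j t * Ψ i t = Φ j t * Ψ i t * ξ t * if (j : ℕ) = k then ξt t else 1 := by
    simp only [v, Fin.val_inj]
    ring
  have key := setIntegral_antitone_det_mul_det_borderedMatrix_mul_sum_prod measurableSet_Icc
    Φ Ψ Ψc v
    (fun σ x => by
      simp only [hv, Equiv.prod_comp σ (fun j => ξ (x j)), Equiv.sum_comp σ (fun j => ξt (x j))])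
    (fun k j i => by
      simp only [hentry]
      split_ifs
      exacts [hint' j i, by simpa only [mul_one] using hint j i])
  simp only [hv, hentry, mul_assoc] at key ⊢
  -- `key` is the goal once `Antitone` and `borderedMatrix` are unfolded
  exact key

/-- Theorem 2 (Appendix B) of Chiani–Win–Shin: an identity for multiple
integrals over the ordered simplex `{b ≥ x₁ ≥ … ≥ x_p ≥ a}` involving the
product of a `p×p` alternant determinant `det[Φᵢ(x_j)]`, an `n×n` bordered
determinant `det M(x)` (with `M(x)ᵢⱼ = Ψᵢ(x_j)` for `j ≤ p` and constants
`Ψᵢⱼ` for `j > p`, `n ≥ p`), a multiplicative weight `∏ ξ(x_m)` and an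
additive factor `Σ ξ̃(x_i)`.  The integral equals `Σ_{k=1}^p det C^{(k)}`,
where in column `j ≤ p` the entry of `C^{(k)}` is the pairing
`∫_a^b Φ(x) Ψᵢ(x) ξ(x) U_{k,j}(ξ̃(x)) dx` (the factor `ξ̃` being inserted only
when `j = k`), and columns `j > p` keep the constants `Ψᵢⱼ`. -/
theorem stmt_8 (p n : ℕ) (hpn : p ≤ n) (a b : ℝ) (hab : a ≤ b)
    (Φ : Fin p → ℝ → ℝ) (Ψ : Fin n → ℝ → ℝ) (Ψc : Fin n → Fin n → ℝ)
    (ξ ξt : ℝ → ℝ)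
    (hΦ : ∀ i, Measurable (Φ i)) (hΨ : ∀ i, Measurable (Ψ i))
    (hξ : Measurable ξ) (hξt : Measurable ξt)
    (hint : ∀ (j : Fin p) (i : Fin n),
      IntegrableOn (fun t => Φ j t * Ψ i t * ξ t) (Set.Icc a b))
    (hint' : ∀ (j : Fin p) (i : Fin n),
      IntegrableOn (fun t => Φ j t * Ψ i t * ξ t * ξt t) (Set.Icc a b)) :
    (∫ x in {x : Fin p → ℝ |
        (∀ i j : Fin p, i ≤ j → x j ≤ x i) ∧ ∀ i, x i ∈ Set.Icc a b},
      Matrix.det (Matrix.of fun i j : Fin p => Φ i (x j)) *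
        Matrix.det (Matrix.of fun i j : Fin n =>
          if h : (j : ℕ) < p then Ψ i (x ⟨j, h⟩) else Ψc i j) *
        (∏ m, ξ (x m)) * (∑ i, ξt (x i))) =
      ∑ k : Fin p,
        Matrix.det (Matrix.of fun i j : Fin n =>
          if h : (j : ℕ) < p then
            ∫ t in Set.Icc a b,
              Φ ⟨j, h⟩ t * Ψ i t * ξ t * (if (j : ℕ) = (k : ℕ) then ξt t else 1)
          else Ψc i j) :=
  stmt_8_general p n hpn a b Φ Ψ Ψc ξ ξt hint hint'
end

section
/- Andréief's identity (used implicitly): for functions Φ_i, Ψ_j : [a,b] → ℝ, i, j = 1,…,n, with all products integrable, ∫_{b ≥ x_1 ≥ … ≥ x_n ≥ a} det[Φ_i(x_j)] det[Ψ_i(x_j)] dx = det[ ∫_a^b Φ_i(x) Ψ_j(x) dx ]_{i,j=1}^n. -/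
/-! Expanding `det[Φᵢ(x_j)]` by the Leibniz formula and using Fubini, the integral of
`det[Φᵢ(x_j)] · ∏ⱼ Ψⱼ(x_j)` over the whole cube is `det[∫ Φᵢ Ψⱼ]`. Since the diagonals
`x_i = x_j` are null, the cube is, up to a null set, the disjoint union of the `n!` chambers
obtained from the ordered simplex by permuting coordinates. Pulling each chamber back to the
simplex turns the integrand into `∑_τ det[Φᵢ(x_{τ j})] ∏ⱼ Ψⱼ(x_{τ j})`, and since
`det[Φᵢ(x_{τ j})] = sign τ · det[Φᵢ(x_j)]` this sum is `det[Φᵢ(x_j)] · det[Ψᵢ(x_j)]`. -/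

open MeasureTheory Matrix Finset

namespace Andreief

section Alternant

variable {ι α R : Type*} [Fintype ι] [DecidableEq ι] [CommRing R]

def alternant (f : ι → α → R) (x : ι → α) : Matrix ι ι R := of fun i j => f i (x j)

lemma det_alternant_comp_perm (f : ι → α → R) (x : ι → α) (τ : Equiv.Perm ι) :
    (alternant f (x ∘ τ)).det = Equiv.Perm.sign τ * (alternant f x).det :=
  det_permute' τ (alternant f x)

lemma sum_perm_det_alternant_comp_mul_prod (f g : ι → α → R) (x : ι → α) :
    ∑ τ : Equiv.Perm ι, (alternant f (x ∘ τ)).det * ∏ j, g j (x (τ j)) =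
      (alternant f x).det * (alternant g x).det := by
  simp only [det_alternant_comp_perm, mul_comm _ (alternant f x).det, mul_assoc, ← mul_sum]
  rw [← det_transpose (alternant g x), det_apply' (alternant g x)ᵀ]
  rfl

lemma det_alternant_mul_prod_eq_sum (f g : ι → α → R) (x : ι → α) :
    (alternant f x).det * ∏ j, g j (x j) =
      ∑ σ : Equiv.Perm ι, (Equiv.Perm.sign σ : R) * ∏ j, f (σ j) (x j) * g j (x j) := by
  simp only [det_apply', sum_mul, mul_assoc, prod_mul_distrib]
  rfl

end Alternant

section ProductIntegral

variable {ι α 𝕜 : Type*} [Fintype ι] [DecidableEq ι] [RCLike 𝕜] [MeasurableSpace α]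
  (μ : Measure α) [SigmaFinite μ] {f g : ι → α → 𝕜}

lemma integrable_det_alternant_mul_prod (hfg : ∀ i j, Integrable (fun t => f i t * g j t) μ) :
    Integrable (fun x => (alternant f x).det * ∏ j, g j (x j)) (Measure.pi fun _ : ι => μ) := by
  simp only [det_alternant_mul_prod_eq_sum]
  exact integrable_finsetSum _ fun σ _ =>
    (Integrable.fintype_prod fun j => hfg (σ j) j).const_mul _

lemma integral_det_alternant_mul_prod (hfg : ∀ i j, Integrable (fun t => f i t * g j t) μ) :
    ∫ x, (alternant f x).det * ∏ j, g j (x j) ∂Measure.pi (fun _ : ι => μ) =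
      (of fun i j => ∫ t, f i t * g j t ∂μ).det := by
  simp only [det_alternant_mul_prod_eq_sum]
  rw [integral_finsetSum _ fun σ _ =>
    (Integrable.fintype_prod fun j => hfg (σ j) j).const_mul _, det_apply']
  refine sum_congr rfl fun σ _ => ?_
  rw [integral_const_mul, integral_fintype_prod_eq_prod (fun j t => f (σ j) t * g j t)]
  rfl

end ProductIntegral

section Diagonal

variable {ι α : Type*} [Fintype ι] [DecidableEq ι] [MeasurableSpace α] [MeasurableEq α]
  (μ : Measure α) [SigmaFinite μ] [NullSingletonClass μ]

lemma pi_setOf_apply_eq_apply {i j : ι} (hij : i ≠ j) :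
    Measure.pi (fun _ : ι => μ) {x | x i = x j} = 0 := by
  -- Split off the coordinate `i`: every slice with the other coordinates fixed is a hyperplane.
  let e := MeasurableEquiv.piEquivPiSubtypeProd (fun _ : ι => α) (· ≠ i)
  have he := measurePreserving_piEquivPiSubtypeProd (fun _ : ι => μ) (· ≠ i)
  set T : Set (({k // k ≠ i} → α) × ({k // ¬k ≠ i} → α)) :=
    {p | p.2 ⟨i, not_not.2 rfl⟩ = p.1 ⟨j, hij.symm⟩}
  have hT : MeasurableSet T := measurableSet_eq_fun (by fun_prop) (by fun_prop)
  have : {x : ι → α | x i = x j} = e ⁻¹' T := rfl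
  rw [this, he.measure_preimage hT.nullMeasurableSet, Measure.measure_prod_null hT]
  exact .of_forall fun y => Measure.pi_hyperplane _ _ _

lemma ae_injective_pi : ∀ᵐ x ∂Measure.pi (fun _ : ι => μ), Function.Injective x := by
  have hne : ∀ i j, ∀ᵐ x ∂Measure.pi (fun _ : ι => μ), i ≠ j → x i ≠ x j := fun i j => by
    rcases eq_or_ne i j with rfl | hij
    · exact .of_forall fun _ h => absurd rfl h
    · exact (measure_eq_zero_iff_ae_notMem.1 (pi_setOf_apply_eq_apply μ hij)).mono
        fun _ hx _ => hx
  filter_upwards [ae_all_iff.2 fun i => ae_all_iff.2 (hne i)] with x hx i j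
  exact not_imp_not.1 (hx i j)

end Diagonal

lemma measurePreserving_comp_perm {ι α : Type*} [Fintype ι] [MeasurableSpace α]
    (μ : Measure α) [SigmaFinite μ] (τ : Equiv.Perm ι) :
    MeasurePreserving (fun x : ι → α => x ∘ τ) (Measure.pi fun _ => μ) (Measure.pi fun _ => μ) :=
  measurePreserving_arrowCongr' _ _ τ.symm (.refl α) fun _ => .id μ

lemma measurableEmbedding_comp_perm {ι α : Type*} [MeasurableSpace α] (τ : Equiv.Perm ι) :
    MeasurableEmbedding (fun x : ι → α => x ∘ τ) :=
  (MeasurableEquiv.arrowCongr' τ.symm (.refl α)).measurableEmbedding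

lemma perm_eq_of_strictAnti_comp {ι α : Type*} [LinearOrder ι] [Finite ι] [Preorder α]
    {x : ι → α} {τ τ' : Equiv.Perm ι} (h : StrictAnti (x ∘ τ)) (h' : StrictAnti (x ∘ τ')) :
    τ = τ' := by
  set σ : Equiv.Perm ι := τ'.trans τ.symm
  have hσ : StrictMono σ := fun i j hij => h.lt_iff_gt.1 (by simpa [σ] using h' hij)
  have : hσ.orderIsoOfSurjective σ σ.surjective = OrderIso.refl ι := Subsingleton.elim _ _
  ext i
  exact (τ.symm_apply_eq.1 (congrArg (· i) this)).symm

lemma exists_perm_strictAnti_comp {n : ℕ} {α : Type*} [LinearOrder α] {x : Fin n → α}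
    (hx : Function.Injective x) : ∃ τ : Equiv.Perm (Fin n), StrictAnti (x ∘ τ) :=
  ⟨Fin.revPerm.trans (Tuple.sort x),
    ((Tuple.monotone_sort x).strictMono_of_injective
      (hx.comp (Tuple.sort x).injective)).comp_strictAnti Fin.rev_strictAnti⟩

section Chambers

variable {ι α : Type*} [Countable ι] [LinearOrder ι] [TopologicalSpace α] [LinearOrder α]
  [OrderClosedTopology α] [SecondCountableTopology α] [MeasurableSpace α] [OpensMeasurableSpace α]

lemma measurableSet_setOf_strictAnti : MeasurableSet {x : ι → α | StrictAnti x} := by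
  simp only [StrictAnti, Set.ofPred_forall]
  exact .iInter fun i => .iInter fun j => .iInter fun _ =>
    measurableSet_lt (by fun_prop) (by fun_prop)

lemma measurableSet_setOf_antitone : MeasurableSet {x : ι → α | Antitone x} := by
  simp only [Antitone, Set.ofPred_forall]
  exact .iInter fun i => .iInter fun j => .iInter fun _ =>
    measurableSet_le (by fun_prop) (by fun_prop)

end Chambers

section Symmetrization

variable {n : ℕ} {α E : Type*} [LinearOrder α] [MeasurableSpace α] [NormedAddCommGroup E]
  [NormedSpace ℝ E] (μ : Measure α) [SigmaFinite μ]

lemma setIntegral_strictAnti_comp_perm (H : (Fin n → α) → E) (τ : Equiv.Perm (Fin n)) :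
    ∫ x in {x | StrictAnti x}, H (x ∘ τ) ∂Measure.pi (fun _ => μ) =
      ∫ x in {x | StrictAnti (x ∘ ⇑τ⁻¹)}, H x ∂Measure.pi fun _ => μ := by
  have hpre : (· ∘ τ) ⁻¹' {x : Fin n → α | StrictAnti (x ∘ ⇑τ⁻¹)} = {x | StrictAnti x} := by
    ext x
    simp [Function.comp_assoc]
  rw [← hpre]
  exact (measurePreserving_comp_perm μ τ).setIntegral_preimage_emb
    (measurableEmbedding_comp_perm τ) H _

variable [TopologicalSpace α] [OrderClosedTopology α] [SecondCountableTopology α]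
  [OpensMeasurableSpace α] [NullSingletonClass μ]

lemma integral_eq_sum_setIntegral_strictAnti_comp {H : (Fin n → α) → E}
    (hH : Integrable H (Measure.pi fun _ => μ)) :
    ∫ x, H x ∂Measure.pi (fun _ => μ) =
      ∑ τ : Equiv.Perm (Fin n), ∫ x in {x | StrictAnti (x ∘ τ)}, H x ∂Measure.pi fun _ => μ := by
  have hC (τ : Equiv.Perm (Fin n)) : MeasurableSet {x : Fin n → α | StrictAnti (x ∘ τ)} :=
    measurableSet_setOf_strictAnti.preimage (measurableEmbedding_comp_perm τ).measurable
  simp_rw [← integral_indicator (hC _)]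
  rw [← integral_finsetSum _ fun τ _ => hH.indicator (hC τ)]
  refine integral_congr_ae ?_
  filter_upwards [ae_injective_pi μ] with x hx
  obtain ⟨τ, hτ⟩ := exists_perm_strictAnti_comp hx
  rw [Finset.sum_eq_single τ (fun τ' _ hne => Set.indicator_of_notMem
    (fun h' => hne (perm_eq_of_strictAnti_comp hτ h').symm) _) (by simp),
    Set.indicator_of_mem hτ]

theorem integral_eq_setIntegral_antitone_sum_perm {H : (Fin n → α) → E}
    (hH : Integrable H (Measure.pi fun _ => μ)) :
    ∫ x, H x ∂Measure.pi (fun _ => μ) =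
      ∫ x in {x | Antitone x}, ∑ τ : Equiv.Perm (Fin n), H (x ∘ τ) ∂Measure.pi fun _ => μ := by
  have hstrict : {x : Fin n → α | StrictAnti x} =ᵐ[Measure.pi fun _ => μ] {x | Antitone x} := by
    filter_upwards [ae_injective_pi μ] with x hx
    exact propext ⟨StrictAnti.antitone, fun h => h.strictAnti_of_injective hx⟩
  have hτ (τ : Equiv.Perm (Fin n)) : Integrable (fun x => H (x ∘ τ)) (Measure.pi fun _ => μ) :=
    (measurePreserving_comp_perm μ τ).integrable_comp_emb
      (measurableEmbedding_comp_perm τ) |>.2 hH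
  calc ∫ x, H x ∂Measure.pi (fun _ => μ)
      = ∑ τ : Equiv.Perm (Fin n),
          ∫ x in {x | StrictAnti (x ∘ ⇑τ⁻¹)}, H x ∂Measure.pi fun _ => μ := by
        rw [integral_eq_sum_setIntegral_strictAnti_comp μ hH,
          ← Equiv.sum_comp (Equiv.inv (Equiv.Perm (Fin n)))]
        rfl
    _ = ∑ τ : Equiv.Perm (Fin n),
          ∫ x in {x | StrictAnti x}, H (x ∘ τ) ∂Measure.pi fun _ => μ := by
        simp only [setIntegral_strictAnti_comp_perm]
    _ = ∫ x in {x | StrictAnti x},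
          ∑ τ : Equiv.Perm (Fin n), H (x ∘ τ) ∂Measure.pi fun _ => μ :=
        (integral_finsetSum _ fun τ _ => (hτ τ).integrableOn).symm
    _ = _ := setIntegral_congr_set hstrict

theorem setIntegral_antitone_det_alternant_mul_det_alternant {𝕜 : Type*} [RCLike 𝕜]
    {f g : Fin n → α → 𝕜} (hfg : ∀ i j, Integrable (fun t => f i t * g j t) μ) :
    ∫ x in {x | Antitone x}, (alternant f x).det * (alternant g x).det ∂Measure.pi (fun _ => μ) =
      (of fun i j => ∫ t, f i t * g j t ∂μ).det := by
  rw [← integral_det_alternant_mul_prod μ hfg,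
    integral_eq_setIntegral_antitone_sum_perm μ (integrable_det_alternant_mul_prod μ hfg)]
  simp only [Function.comp_apply, sum_perm_det_alternant_comp_mul_prod]

end Symmetrization

end Andreief

open Andreief

theorem stmt_10_general (n : ℕ) (a b : ℝ)
    (Φ Ψ : Fin n → ℝ → ℝ)
    (hint : ∀ i j, IntegrableOn (fun t => Φ i t * Ψ j t) (Set.Icc a b)) :
    (∫ x in {x : Fin n → ℝ |
        (∀ i j : Fin n, i ≤ j → x j ≤ x i) ∧ ∀ i, x i ∈ Set.Icc a b},
      Matrix.det (Matrix.of fun i j : Fin n => Φ i (x j)) *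
        Matrix.det (Matrix.of fun i j : Fin n => Ψ i (x j))) =
      Matrix.det (Matrix.of fun i j : Fin n =>
        ∫ t in Set.Icc a b, Φ i t * Ψ j t) := by
  have hset : {x : Fin n → ℝ | (∀ i j : Fin n, i ≤ j → x j ≤ x i) ∧ ∀ i, x i ∈ Set.Icc a b} =
      {x | Antitone x} ∩ Set.univ.pi fun _ => Set.Icc a b := by
    ext x
    simp only [Set.mem_ofPred_eq, Set.mem_inter_iff, Set.mem_univ_pi, Antitone]
  rw [hset, ← Measure.restrict_restrict measurableSet_setOf_antitone, volume_pi,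
    Measure.restrict_pi_pi]
  exact setIntegral_antitone_det_alternant_mul_det_alternant _ hint

/-- Andréief's identity: for functions `Φᵢ, Ψⱼ : [a,b] → ℝ` with all products
integrable, the integral of the product of the two `n×n` alternant
determinants `det[Φᵢ(x_j)]·det[Ψᵢ(x_j)]` over the ordered simplex
`{b ≥ x₁ ≥ … ≥ x_n ≥ a}` equals `det[∫_a^b Φᵢ(x)Ψⱼ(x) dx]`. -/
theorem stmt_10 (n : ℕ) (a b : ℝ) (hab : a ≤ b)
    (Φ Ψ : Fin n → ℝ → ℝ)
    (hΦ : ∀ i, Measurable (Φ i))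
    (hΨ : ∀ i, Measurable (Ψ i))
    (hint : ∀ i j, IntegrableOn (fun t => Φ i t * Ψ j t) (Set.Icc a b)) :
    (∫ x in {x : Fin n → ℝ |
        (∀ i j : Fin n, i ≤ j → x j ≤ x i) ∧ ∀ i, x i ∈ Set.Icc a b},
      Matrix.det (Matrix.of fun i j : Fin n => Φ i (x j)) *
        Matrix.det (Matrix.of fun i j : Fin n => Ψ i (x j))) =
      Matrix.det (Matrix.of fun i j : Fin n =>
        ∫ t in Set.Icc a b, Φ i t * Ψ j t) :=
  stmt_10_general n a b Φ Ψ hint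
end
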